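/- Let n ≥ 3, let A ⊆ M_n(S) be the subring of lower triangular matrices with diagonal entries in the image of k → S, let P_i (1 ≤ i ≤ n) be the column modules as below, and let s_i : P_n → P_i (1 ≤ i ≤ n−1) be the inclusions. Then the inclusion A ↪ M_n(S) is the universal {s_1, …, s_{n−1}}-inverting ring homomorphism: for every ring T and every ring homomorphism f : A → T such that for each 1 ≤ i ≤ n−1 the induced map id_T ⊗ s_i : T ⊗_A P_n → T ⊗_A P_i is an isomorphism (T regarded as a right A-module via f), there exists a unique ring homomorphism g : M_n(S) → T whose restriction to A equals f. -/

import Mathlib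

/-!
Write `ℓ = n - 1` and `E p q` for the matrix units. Each `P_i` is the column `A E_ii`, so
`T ⊗_A P_i ≅ T f(E_ii)` and `id_T ⊗ s_i` becomes right multiplication by `f(E_ℓi)`; it is bijective
iff `f(E_ℓi)` has an inverse `π_i ∈ f(E_ii) T f(E_ℓℓ)`, the would-be image of `E_iℓ`.
Any extension `g` of `f` must then satisfy `g(s E_pq) = π_p f(s E_ℓ0) π_0 f(E_ℓq)`, which gives
uniqueness. Conversely this formula defines a ring homomorphism: the `π_p` and `f(E_ℓq)` multiply
like matrix units, and `s ↦ f(s E_ℓ0) π_0` is multiplicative thanks to an index strictly between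
`0` and `ℓ`.
-/

open scoped TensorProduct
open Function

universe u v w

section TT
/-! Tensor product `R ⊗_C P` where `R` is made into a right `C`-module via a
ring homomorphism `f : C →+* R`, and `P` is a left `C`-module. -/

variable {C : Type u} {R : Type v} [Ring C] [Ring R] (f : C →+* R)

def TT.rels (P : Type w) [AddCommGroup P] [Module C P] :
    Submodule ℤ (TensorProduct ℤ R P) :=
  Submodule.span ℤ {z | ∃ (r : R) (c : C) (p : P),
    z = (r * f c) ⊗ₜ[ℤ] p - r ⊗ₜ[ℤ] (c • p)}

/-- `R ⊗_C P`, with `R` a right `C`-module via `f : C →+* R`. -/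
def TT (P : Type w) [AddCommGroup P] [Module C P] : Type (max v w) :=
  TensorProduct ℤ R P ⧸ TT.rels f P

noncomputable instance (P : Type w) [AddCommGroup P] [Module C P] :
    AddCommGroup (TT f P) :=
  inferInstanceAs (AddCommGroup (TensorProduct ℤ R P ⧸ TT.rels f P))

/-- The class of `r ⊗ p` in `R ⊗_C P`. -/
noncomputable def TT.mk {P : Type w} [AddCommGroup P] [Module C P] (r : R) (p : P) :
    TT f P := Submodule.Quotient.mk (r ⊗ₜ[ℤ] p)

/-- The map `R ⊗_C P → R ⊗_C P'` induced by a map of left `C`-modules. -/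
noncomputable def TT.map {P P' : Type w} [AddCommGroup P] [Module C P]
    [AddCommGroup P'] [Module C P'] (g : P →ₗ[C] P') : TT f P →ₗ[ℤ] TT f P' :=
  Submodule.mapQ _ _ (LinearMap.lTensor R g.toAddMonoidHom.toIntLinearMap) (by
    rw [TT.rels, Submodule.span_le]
    rintro z ⟨r, c, p, rfl⟩
    simp only [SetLike.mem_coe, Submodule.mem_comap, map_sub, LinearMap.lTensor_tmul,
      AddMonoidHom.coe_toIntLinearMap, LinearMap.toAddMonoidHom_coe]
    exact Submodule.subset_span ⟨r, c, g p, by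
      erw [map_sub, LinearMap.lTensor_tmul, LinearMap.lTensor_tmul]
      simp [map_smul]⟩)

end TT

variable (k : Type u) (S : Type u) [CommRing k] [Ring S] [Algebra k S] (n : ℕ)

/-- The subring of `n × n` lower triangular matrices over `S` whose diagonal
entries lie in the image of `k → S`. -/
def lowTri : Subring (Matrix (Fin n) (Fin n) S) where
  carrier := {m | (∀ p q : Fin n, p < q → m p q = 0) ∧
    ∀ p : Fin n, m p p ∈ (algebraMap k S).range}
  zero_mem' := ⟨fun _ _ _ => rfl, fun _ => zero_mem _⟩
  one_mem' := ⟨fun p q h => Matrix.one_apply_ne (ne_of_lt h), fun _ => by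
    simpa [Matrix.one_apply] using one_mem (algebraMap k S).range⟩
  add_mem' := fun {a b} ha hb => ⟨fun p q h => by
      simp [Matrix.add_apply, ha.1 p q h, hb.1 p q h],
    fun p => add_mem (ha.2 p) (hb.2 p)⟩
  neg_mem' := fun {a} ha => ⟨fun p q h => by simp [Matrix.neg_apply, ha.1 p q h],
    fun p => neg_mem (ha.2 p)⟩
  mul_mem' := fun {a b} ha hb => by
    constructor
    · intro p q h
      rw [Matrix.mul_apply]
      apply Finset.sum_eq_zero
      intro l _
      rcases lt_or_ge p l with h' | h'
      · rw [ha.1 p l h', zero_mul]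
      · rw [hb.1 l q (lt_of_le_of_lt h' h), mul_zero]
    · intro p
      rw [Matrix.mul_apply]
      rw [Finset.sum_eq_single p]
      · exact mul_mem (ha.2 p) (hb.2 p)
      · intro l _ hl
        rcases lt_or_gt_of_ne hl with h' | h'
        · rw [hb.1 l p h', mul_zero]
        · rw [ha.1 p l h', zero_mul]
      · intro h; exact absurd (Finset.mem_univ p) h

/-- The space of column vectors `v ∈ Sⁿ` with `v j = 0` for `j < i` and
`v i` in the image of `k → S` (as a `k`-submodule of `Sⁿ`). -/
def Pcol (i : ℕ) : Submodule k (Fin n → S) where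
  carrier := {v | (∀ j : Fin n, (j : ℕ) < i → v j = 0) ∧
    ∀ j : Fin n, (j : ℕ) = i → v j ∈ (algebraMap k S).range}
  zero_mem' := ⟨fun _ _ => rfl, fun _ _ => zero_mem _⟩
  add_mem' := fun {a b} ha hb => ⟨fun j hj => by simp [Pi.add_apply, ha.1 j hj, hb.1 j hj],
    fun j hj => add_mem (ha.2 j hj) (hb.2 j hj)⟩
  smul_mem' := fun c v hv => ⟨fun j hj => by simp [Pi.smul_apply, hv.1 j hj],
    fun j hj => by
      obtain ⟨x, hx⟩ := hv.2 j hj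
      exact ⟨c * x, by rw [map_mul, Pi.smul_apply, ← hx, Algebra.smul_def]⟩⟩

lemma mulVec_mem_Pcol {i : ℕ} {a : Matrix (Fin n) (Fin n) S} (ha : a ∈ lowTri k S n)
    {v : Fin n → S} (hv : v ∈ Pcol k S n i) : a.mulVec v ∈ Pcol k S n i := by
  constructor
  · intro j hj
    rw [Matrix.mulVec, dotProduct]
    apply Finset.sum_eq_zero
    intro l _
    rcases lt_or_ge (l : ℕ) i with h' | h'
    · rw [hv.1 l h', mul_zero]
    · rw [ha.1 j l (by rw [Fin.lt_def]; omega), zero_mul]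
  · intro j hj
    have : a.mulVec v j = a j j * v j := by
      rw [Matrix.mulVec, dotProduct]
      rw [Finset.sum_eq_single j]
      · intro l _ hl
        rcases lt_or_gt_of_ne hl with h' | h'
        · rw [hv.1 l (by rw [Fin.lt_def] at h'; omega), mul_zero]
        · rw [ha.1 j l h', zero_mul]
      · intro h; exact absurd (Finset.mem_univ j) h
    rw [this]
    exact mul_mem (ha.2 j) (hv.2 j hj)

/-- Left action of the subring `lowTri k S n` on the column modules. -/
noncomputable instance Pcol.smulLowTri (i : ℕ) :
    SMul (lowTri k S n) (Pcol k S n i) :=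
  ⟨fun a v => ⟨a.1.mulVec v.1, mulVec_mem_Pcol k S n a.2 v.2⟩⟩

noncomputable instance Pcol.moduleLowTri (i : ℕ) :
    Module (lowTri k S n) (Pcol k S n i) where
  smul := (· • ·)
  one_smul v := Subtype.ext (Matrix.one_mulVec v.1)
  mul_smul a b v := Subtype.ext (Matrix.mulVec_mulVec v.1 a.1 b.1).symm
  smul_zero a := Subtype.ext (Matrix.mulVec_zero a.1)
  smul_add a v w := Subtype.ext (Matrix.mulVec_add a.1 v.1 w.1)
  add_smul a b v := Subtype.ext (Matrix.add_mulVec a.1 b.1 v.1)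
  zero_smul v := Subtype.ext (Matrix.zero_mulVec v.1)

@[simp] lemma Pcol.smul_def (i : ℕ) (a : lowTri k S n) (v : Pcol k S n i) :
    (a • v : Pcol k S n i).1 = a.1.mulVec v.1 := rfl

instance Pcol.smulCommClass (i : ℕ) :
    SMulCommClass k (lowTri k S n) (Pcol k S n i) where
  smul_comm c a v := Subtype.ext (Matrix.mulVec_smul a.1 c v.1).symm

/-- Left action of `lowTri k S n` on the module of all column vectors. -/
noncomputable instance colSMul : SMul (lowTri k S n) (Fin n → S) :=
  ⟨fun a v => a.1.mulVec v⟩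

noncomputable instance colModule : Module (lowTri k S n) (Fin n → S) where
  smul := (· • ·)
  one_smul v := Matrix.one_mulVec v
  mul_smul a b v := (Matrix.mulVec_mulVec v a.1 b.1).symm
  smul_zero a := Matrix.mulVec_zero a.1
  smul_add a v w := Matrix.mulVec_add a.1 v w
  add_smul a b v := Matrix.add_mulVec a.1 b.1 v
  zero_smul v := Matrix.zero_mulVec v

/-- Right action of `lowTri k S n` on the module of all row vectors. -/
noncomputable instance rowSMul : SMul (lowTri k S n)ᵐᵒᵖ (Fin n → S) :=
  ⟨fun a v => Matrix.vecMul v a.unop.1⟩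

noncomputable instance rowModule : Module (lowTri k S n)ᵐᵒᵖ (Fin n → S) where
  smul := (· • ·)
  one_smul v := Matrix.vecMul_one v
  mul_smul a b v := by
    show Matrix.vecMul v (b.unop.1 * a.unop.1) = Matrix.vecMul (Matrix.vecMul v b.unop.1) a.unop.1
    rw [Matrix.vecMul_vecMul]
  smul_zero a := Matrix.zero_vecMul a.unop.1
  smul_add a v w := Matrix.add_vecMul a.unop.1 v w
  add_smul a b v := Matrix.vecMul_add a.unop.1 b.unop.1 v
  zero_smul v := Matrix.vecMul_zero v

lemma Pcol_anti {i j : ℕ} (h : i ≤ j) : Pcol k S n j ≤ Pcol k S n i := by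
  rintro v ⟨h1, h2⟩
  constructor
  · intro l hl
    exact h1 l (lt_of_lt_of_le hl h)
  · intro l hl
    rcases eq_or_lt_of_le h with rfl | h'
    · exact h2 l hl
    · rw [h1 l (by omega)]
      exact zero_mem _

/-- A ring homomorphism `f : A → T` inverts the inclusions `s_i : P_{n-1} → P_i`
(`i < n-1`) if each induced map `id_T ⊗ s_i : T ⊗_A P_{n-1} → T ⊗_A P_i` is an
isomorphism, where `T` is a right `A`-module via `f`. -/
def InvertsSigma {T : Type u} [Ring T] (f : (lowTri k S n) →+* T) : Prop :=
  ∀ (i : ℕ) (_ : i < n - 1),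
    ∃ e : TT f (Pcol k S n (n - 1)) ≃+ TT f (Pcol k S n i),
      ∀ (t : T) (p : Pcol k S n (n - 1)),
        e (TT.mk f t p) = TT.mk f t (Submodule.inclusion (Pcol_anti k S n (by omega)) p)

namespace TT

variable {C : Type u} {R : Type v} [Ring C] [Ring R] (f : C →+* R)
variable {P P' : Type w} [AddCommGroup P] [Module C P] [AddCommGroup P'] [Module C P']

theorem mk_mul_eq_mk_smul (t : R) (c : C) (p : P) : mk f (t * f c) p = mk f t (c • p) :=
  (Submodule.Quotient.eq _).mpr (Submodule.subset_span ⟨t, c, p, rfl⟩)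

theorem mk_add_left (t t' : R) (p : P) : mk f (t + t') p = mk f t p + mk f t' p :=
  congrArg Submodule.Quotient.mk (TensorProduct.add_tmul t t' p)

@[elab_as_elim]
theorem induction_on {motive : TT f P → Prop} (x : TT f P) (zero : motive 0)
    (mk : ∀ t p, motive (mk f t p)) (add : ∀ x y, motive x → motive y → motive (x + y)) :
    motive x := by
  obtain ⟨y, rfl⟩ := Submodule.Quotient.mk_surjective (TT.rels f P) x
  induction y using TensorProduct.induction_on with
  | zero => exact zero
  | tmul t p => exact mk t p
  | add a b ha hb => exact add _ _ ha hb

theorem ext_mk {X : Type*} [AddCommGroup X] {φ ψ : TT f P →+ X}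
    (h : ∀ t p, φ (mk f t p) = ψ (mk f t p)) : φ = ψ :=
  AddMonoidHom.ext fun x => induction_on f x (by simp) h fun x y hx hy => by simp [hx, hy]

noncomputable def liftAdd {X : Type*} [AddCommGroup X] (B : R →+ P →+ X)
    (hB : ∀ t c p, B (t * f c) p = B t (c • p)) : TT f P →+ X :=
  (Submodule.liftQ (rels f P) (TensorProduct.liftAddHom B fun z t p => by
      simp only [map_zsmul, AddMonoidHom.smul_apply]).toIntLinearMap <| by
    rw [rels, Submodule.span_le]
    rintro _ ⟨t, c, p, rfl⟩
    simp [hB]).toAddMonoidHom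

@[simp] theorem liftAdd_mk {X : Type*} [AddCommGroup X] (B : R →+ P →+ X)
    (hB : ∀ t c p, B (t * f c) p = B t (c • p)) (t : R) (p : P) :
    liftAdd f B hB (mk f t p) = B t p := rfl

@[simp] theorem map_mk (g : P →ₗ[C] P') (t : R) (p : P) : map f g (mk f t p) = mk f t (g p) := rfl

end TT

/-- A left `C`-module isomorphic to the left ideal `C ε` of an idempotent `ε = coord gen`. -/
structure CyclicSummand (C : Type u) (P : Type w) [Ring C] [AddCommGroup P] [Module C P] where
  coord : P →ₗ[C] C
  gen : P
  coord_smul_gen : ∀ p, coord p • gen = p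

namespace CyclicSummand

variable {C : Type u} {T : Type v} [Ring C] [Ring T] (f : C →+* T)
variable {P P' : Type w} [AddCommGroup P] [Module C P] [AddCommGroup P'] [Module C P']
variable (D : CyclicSummand C P) (D' : CyclicSummand C P')

theorem coord_mul_coord_gen (p : P) : D.coord p * D.coord D.gen = D.coord p := by
  rw [← smul_eq_mul, ← map_smul, D.coord_smul_gen]

/-- The isomorphism `T ⊗_C P ≅ T f(ε)`. -/
noncomputable def toT : TT f P →+ T :=
  TT.liftAdd f (AddMonoidHom.mul.compl₂ ((f : C →+ T).comp D.coord.toAddMonoidHom))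
    fun t c p => by simp [mul_assoc]

@[simp] theorem toT_mk (t : T) (p : P) : D.toT f (TT.mk f t p) = t * f (D.coord p) :=
  TT.liftAdd_mk _ _ _ t p

/-- The inverse of `toT` on `T f(ε)`. -/
noncomputable def ofT : T →+ TT f P :=
  AddMonoidHom.mk' (fun t => TT.mk f t D.gen) fun t t' => TT.mk_add_left f t t' D.gen

theorem ofT_apply (t : T) : D.ofT f t = TT.mk f t D.gen := rfl

theorem ofT_toT (x : TT f P) : D.ofT f (D.toT f x) = x :=
  TT.induction_on f x (by rw [map_zero, map_zero])
    (fun t p => by rw [toT_mk, ofT_apply, TT.mk_mul_eq_mk_smul, D.coord_smul_gen])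
    fun x y hx hy => by rw [map_add, map_add, hx, hy]

theorem toT_ofT (t : T) : D.toT f (D.ofT f t) = t * f (D.coord D.gen) := rfl

theorem toT_mul_coord_gen (x : TT f P) : D.toT f x * f (D.coord D.gen) = D.toT f x :=
  TT.induction_on f x (by simp)
    (fun t p => by rw [toT_mk, mul_assoc, ← map_mul, coord_mul_coord_gen])
    fun x y hx hy => by rw [map_add, add_mul, hx, hy]

variable (s : P →ₗ[C] P')

theorem toT_map (x : TT f P) :
    D'.toT f (TT.map f s x) = D.toT f x * f (D'.coord (s D.gen)) :=
  TT.induction_on f x (by simp)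
    (fun t p => by
      conv_lhs => rw [TT.map_mk, toT_mk, ← D.coord_smul_gen p, map_smul, map_smul, smul_eq_mul]
      rw [toT_mk, map_mul, mul_assoc])
    fun x y hx hy => by rw [map_add, map_add, map_add, add_mul, hx, hy]

theorem map_ofT (t : T) : TT.map f s (D.ofT f t) = D'.ofT f (t * f (D'.coord (s D.gen))) := by
  rw [ofT_apply, ofT_apply, TT.map_mk, TT.mk_mul_eq_mk_smul, D'.coord_smul_gen]

theorem bijective_map_of_inverse {π : T} (hσπ : f (D'.coord (s D.gen)) * π = f (D.coord D.gen))
    (hπσ : π * f (D'.coord (s D.gen)) = f (D'.coord D'.gen)) : Bijective (TT.map f s) := by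
  refine bijective_iff_has_inverse.mpr
    ⟨fun y => D.ofT f (D'.toT f y * π), fun x => ?_, fun y => ?_⟩
  · dsimp only
    rw [toT_map, mul_assoc, hσπ, toT_mul_coord_gen, ofT_toT]
  · dsimp only
    rw [map_ofT, mul_assoc, hπσ, toT_mul_coord_gen, ofT_toT]

theorem exists_inverse_of_bijective (h : Bijective (TT.map f s)) :
    ∃ π, π * f (D.coord D.gen) = π ∧ f (D'.coord (s D.gen)) * π = f (D.coord D.gen) ∧
      π * f (D'.coord (s D.gen)) = f (D'.coord D'.gen) := by
  set σ := f (D'.coord (s D.gen))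
  obtain ⟨y, hy⟩ := h.2 (D'.ofT f 1)
  have hπσ : D.toT f y * σ = f (D'.coord D'.gen) := by
    rw [← toT_map, hy, toT_ofT, one_mul]
  have hσ : σ * f (D'.coord D'.gen) = σ := by rw [← map_mul, coord_mul_coord_gen]
  have hσπ : D.ofT f (σ * D.toT f y) = D.ofT f 1 := h.1 <| by
    rw [map_ofT, map_ofT, mul_assoc, hπσ, hσ, one_mul]
  refine ⟨D.toT f y, toT_mul_coord_gen f D y, ?_, hπσ⟩
  have := congrArg (D.toT f) hσπ
  rwa [toT_ofT, toT_ofT, mul_assoc, toT_mul_coord_gen, one_mul] at this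

end CyclicSummand

namespace Matrix

variable {ι : Type*} [Fintype ι] [DecidableEq ι] {R T : Type*} [Ring R] [Ring T]

/-- The ring homomorphism `Matrix ι ι R →+* T` sending `s • E p q` to `c p * δ s * r q`, where
`c p`, `r q` and `δ s` are to be the images of `E p ℓ`, `E ℓ q` and `s • E ℓ ℓ` for a fixed `ℓ`. -/
noncomputable def liftCorner (δ : R →ₙ+* T) (c r : ι → T)
    (hrc : ∀ q p, r q * c p = if q = p then δ 1 else 0) (hsum : ∑ p, c p * δ 1 * r p = 1) :
    Matrix ι ι R →+* T where
  toFun x := ∑ p, ∑ q, c p * δ (x p q) * r q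
  map_zero' := by simp
  map_add' x y := by simp only [add_apply, map_add, mul_add, add_mul, Finset.sum_add_distrib]
  map_one' := by
    rw [← hsum]
    refine Finset.sum_congr rfl fun p _ => ?_
    rw [Finset.sum_eq_single p
      (fun q _ hq => by rw [one_apply_ne' hq, map_zero, mul_zero, zero_mul]) (by simp),
      one_apply_eq]
  map_mul' x y := by
    have hprod : ∀ p q q' w, c p * δ (x p q) * r q * (c q' * δ (y q' w) * r w) =
        if q = q' then c p * δ (x p q * y q w) * r w else 0 := by
      intro p q q' w
      calc c p * δ (x p q) * r q * (c q' * δ (y q' w) * r w)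
          = c p * (δ (x p q) * (r q * c q') * δ (y q' w)) * r w := by simp only [mul_assoc]
        _ = _ := by split_ifs with h <;> simp [hrc, h, ← map_mul]
    simp only [mul_apply, map_sum, Finset.mul_sum, Finset.sum_mul, hprod, Finset.sum_ite_eq',
      Finset.mem_univ, if_true]
    rw [Finset.sum_comm]
    conv_rhs => rw [Finset.sum_comm]
    exact Finset.sum_congr rfl fun _ _ => Finset.sum_comm

theorem liftCorner_single (δ : R →ₙ+* T) (c r : ι → T)
    (hrc : ∀ q p, r q * c p = if q = p then δ 1 else 0) (hsum : ∑ p, c p * δ 1 * r p = 1)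
    (p q : ι) (s : R) : liftCorner δ c r hrc hsum (single p q s) = c p * δ s * r q := by
  have hzero : ∀ p' q', ¬(p = p' ∧ q = q') → c p' * δ (single p q s p' q') * r q' = 0 :=
    fun p' q' h => by rw [single_apply_of_ne _ _ _ _ _ h, map_zero, mul_zero, zero_mul]
  change ∑ p', ∑ q', _ = _
  rw [Finset.sum_eq_single p (fun p' _ hp => Finset.sum_eq_zero fun q' _ =>
      hzero p' q' fun h => hp h.1.symm) (by simp),
    Finset.sum_eq_single q (fun q' _ hq => hzero p q' fun h => hq h.2.symm) (by simp),
    single_apply_same]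

theorem ringHom_ext_single {g g' : Matrix ι ι R →+* T}
    (h : ∀ p q s, g (single p q s) = g' (single p q s)) : g = g' :=
  RingHom.coe_addMonoidHom_injective <| ext_addMonoidHom fun p q => AddMonoidHom.ext (h p q)

end Matrix

open Matrix

namespace lowTri

variable {k S n}

theorem single_mem {p q : Fin n} {s : S} (h : q < p ∨ q = p ∧ s ∈ (algebraMap k S).range) :
    single p q s ∈ lowTri k S n := by
  refine ⟨fun r c hrc => single_apply_of_ne _ _ _ _ _ ?_, fun r => ?_⟩
  · rintro ⟨rfl, rfl⟩
    rcases h with h | ⟨rfl, -⟩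
    · exact lt_asymm h hrc
    · exact lt_irrefl _ hrc
  · rw [single_apply]
    split_ifs with hr
    · obtain ⟨rfl, rfl⟩ := hr
      rcases h with h | ⟨-, hs⟩
      · exact (lt_irrefl _ h).elim
      · exact hs
    · exact zero_mem _

theorem single_one_mem {p q : Fin n} (h : q ≤ p) : single p q (1 : S) ∈ lowTri k S n :=
  single_mem (h.lt_or_eq.imp id fun h => ⟨h, 1, map_one _⟩)

theorem single_apply_mem (a : lowTri k S n) (p q : Fin n) :
    single p q (a.1 p q) ∈ lowTri k S n := by
  rcases lt_trichotomy q p with h | rfl | h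
  · exact single_mem (Or.inl h)
  · exact single_mem (Or.inr ⟨rfl, a.2.2 q⟩)
  · rw [a.2.1 p q h, single_zero]
    exact zero_mem _

theorem eq_sum_single (a : lowTri k S n) :
    a = ∑ p, ∑ q, (⟨single p q (a.1 p q), single_apply_mem a p q⟩ : lowTri k S n) := by
  apply Subtype.ext
  simp only [AddSubmonoidClass.coe_finsetSum]
  exact matrix_eq_sum_single a.1

variable {T : Type*} [Ring T] (f : lowTri k S n →+* T)

open Classical in
/-- Lets us write `f (s • E p q)` without a membership proof; it is only ever used on `A`. -/
noncomputable def extend (x : Matrix (Fin n) (Fin n) S) : T :=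
  if h : x ∈ lowTri k S n then f ⟨x, h⟩ else 0

theorem extend_of_mem {x : Matrix (Fin n) (Fin n) S} (hx : x ∈ lowTri k S n) :
    extend f x = f ⟨x, hx⟩ :=
  dif_pos hx

theorem extend_coe (a : lowTri k S n) : extend f a = f a :=
  extend_of_mem f a.2

theorem extend_add {x y : Matrix (Fin n) (Fin n) S} (hx : x ∈ lowTri k S n)
    (hy : y ∈ lowTri k S n) : extend f (x + y) = extend f x + extend f y := by
  rw [extend_of_mem f hx, extend_of_mem f hy, extend_of_mem f (add_mem hx hy), ← map_add]
  rfl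

theorem extend_mul {x y : Matrix (Fin n) (Fin n) S} (hx : x ∈ lowTri k S n)
    (hy : y ∈ lowTri k S n) : extend f (x * y) = extend f x * extend f y := by
  rw [extend_of_mem f hx, extend_of_mem f hy, extend_of_mem f (mul_mem hx hy), ← map_mul]
  rfl

theorem extend_zero : extend f 0 = 0 :=
  (extend_of_mem f (zero_mem _)).trans (map_zero f)

theorem sum_extend_single_one : ∑ p, extend f (single p p 1) = 1 := by
  simp only [extend_of_mem f (single_one_mem le_rfl), ← map_sum, ← map_one f]
  congr 1
  apply Subtype.ext
  simp only [AddSubmonoidClass.coe_finsetSum, sum_single_one]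
  rfl

end lowTri

namespace Pcol

variable {k S n}

theorem vecMulVec_single_mem_lowTri {i : Fin n} {v : Fin n → S} (hv : v ∈ Pcol k S n i) :
    vecMulVec v (Pi.single i 1) ∈ lowTri k S n := by
  refine ⟨fun p q hpq => ?_, fun p => ?_⟩ <;> rw [vecMulVec_apply, Pi.single_apply]
  · split_ifs with h
    · subst h
      rw [hv.1 p hpq, zero_mul]
    · rw [mul_zero]
  · split_ifs with h
    · rw [mul_one]
      exact hv.2 p (congrArg Fin.val h)
    · rw [mul_zero]
      exact zero_mem _

theorem single_one_mem (i : Fin n) : Pi.single i (1 : S) ∈ Pcol k S n i :=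
  ⟨fun j hj => by rw [Pi.single_apply, if_neg (by rintro rfl; exact lt_irrefl _ hj)],
    fun j hj => by rw [Fin.ext hj, Pi.single_eq_same]; exact ⟨1, map_one _⟩⟩

variable (k S n) in
/-- `P_i` is the `i`-th column `A E_ii` of `A`. -/
noncomputable def cyclicSummand (i : Fin n) : CyclicSummand (lowTri k S n) (Pcol k S n i) where
  coord :=
    { toFun := fun v => ⟨vecMulVec v.1 (Pi.single i 1), vecMulVec_single_mem_lowTri v.2⟩
      map_add' := fun v w => Subtype.ext (add_vecMulVec _ _ _)
      map_smul' := fun a v => Subtype.ext (mul_vecMulVec a.1 v.1 _).symm }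
  gen := ⟨Pi.single i 1, single_one_mem i⟩
  coord_smul_gen v := Subtype.ext <| by
    change vecMulVec v.1 (Pi.single i 1) *ᵥ Pi.single i 1 = v.1
    rw [vecMulVec_mulVec, single_dotProduct, one_mul, Pi.single_eq_same, MulOpposite.op_one,
      one_smul]

variable (k S n) in
def incl {i j : ℕ} (h : i ≤ j) : Pcol k S n j →ₗ[lowTri k S n] Pcol k S n i where
  toFun := Submodule.inclusion (Pcol_anti k S n h)
  map_add' _ _ := rfl
  map_smul' _ _ := rfl

theorem coe_coord_incl_gen {i j : Fin n} (h : (i : ℕ) ≤ j) :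
    ((cyclicSummand k S n i).coord (incl k S n h (cyclicSummand k S n j).gen) :
      Matrix (Fin n) (Fin n) S) = single j i 1 :=
  (single_eq_single_vecMulVec_single j i).symm

theorem coe_coord_gen (i : Fin n) :
    ((cyclicSummand k S n i).coord (cyclicSummand k S n i).gen : Matrix (Fin n) (Fin n) S) =
      single i i 1 :=
  coe_coord_incl_gen le_rfl

variable {T : Type u} [Ring T] (f : lowTri k S n →+* T)

theorem bijective_map_incl_iff {i j : Fin n} (h : (i : ℕ) ≤ j) :
    Bijective (TT.map f (incl k S n h)) ↔
      ∃ π, π * lowTri.extend f (single j j 1) = π ∧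
        lowTri.extend f (single j i 1) * π = lowTri.extend f (single j j 1) ∧
        π * lowTri.extend f (single j i 1) = lowTri.extend f (single i i 1) := by
  constructor
  · intro hb
    simpa only [← lowTri.extend_coe f, coe_coord_gen, coe_coord_incl_gen h] using
      (cyclicSummand k S n j).exists_inverse_of_bijective f (cyclicSummand k S n i) _ hb
  · rintro ⟨π, -, hσπ, hπσ⟩
    refine (cyclicSummand k S n j).bijective_map_of_inverse f (cyclicSummand k S n i) _
      (π := π) ?_ ?_ <;> simpa only [← lowTri.extend_coe f, coe_coord_gen, coe_coord_incl_gen h]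

end Pcol

variable {k S n} in
theorem invertsSigma_iff_bijective {T : Type u} [Ring T] (f : lowTri k S n →+* T) :
    InvertsSigma k S n f ↔
      ∀ i (hi : i < n - 1), Bijective (TT.map f (Pcol.incl k S n hi.le)) := by
  refine forall₂_congr fun i hi => ⟨fun ⟨e, he⟩ => ?_, fun h => ⟨.ofBijective _ h, fun _ _ => rfl⟩⟩
  have : e.toAddMonoidHom = (TT.map f (Pcol.incl k S n hi.le)).toAddMonoidHom := TT.ext_mk f he
  rw [← LinearMap.toAddMonoidHom_coe, ← this]
  exact e.bijective

section LastColumn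

variable {k S} {m : ℕ} {T : Type*} [Ring T] (f : lowTri k S (m + 1) →+* T)

local notation "ℓ" => Fin.last m

/-- `π p` plays the role of the matrix unit `E p ℓ`: an inverse of `f (E ℓ p)` between the corners
cut out by `E ℓ ℓ` and `E p p`. -/
structure IsLastColumn (π : Fin (m + 1) → T) : Prop where
  mul_extend_last : ∀ p, π p * lowTri.extend f (single ℓ ℓ 1) = π p
  extend_row_mul : ∀ p, lowTri.extend f (single ℓ p 1) * π p = lowTri.extend f (single ℓ ℓ 1)
  mul_extend_row : ∀ p, π p * lowTri.extend f (single ℓ p 1) = lowTri.extend f (single p p 1)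

/-- The candidate image of `s • E ℓ ℓ = (s • E ℓ 0) * E 0 ℓ`. -/
noncomputable def lastCorner (π : Fin (m + 1) → T) (s : S) : T :=
  lowTri.extend f (single ℓ 0 s) * π 0

theorem lastCorner_add {π : Fin (m + 1) → T} (h0 : 0 < ℓ) (s s' : S) :
    lastCorner f π (s + s') = lastCorner f π s + lastCorner f π s' := by
  rw [lastCorner, lastCorner, lastCorner, ← add_mul, ← lowTri.extend_add f
    (lowTri.single_mem (Or.inl h0)) (lowTri.single_mem (Or.inl h0)), single_add]

end LastColumn

variable {k S} in
theorem invertsSigma_iff_exists_isLastColumn {m : ℕ} {T : Type u} [Ring T]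
    (f : lowTri k S (m + 1) →+* T) : InvertsSigma k S (m + 1) f ↔ ∃ π, IsLastColumn f π := by
  rw [invertsSigma_iff_bijective]
  constructor
  · intro h
    have : ∀ p : Fin (m + 1), ∃ x, x * lowTri.extend f (single (Fin.last m) (Fin.last m) 1) = x ∧
        lowTri.extend f (single (Fin.last m) p 1) * x =
          lowTri.extend f (single (Fin.last m) (Fin.last m) 1) ∧
        x * lowTri.extend f (single (Fin.last m) p 1) = lowTri.extend f (single p p 1) := by
      intro p
      rcases (Fin.le_last p).lt_or_eq with hp | rfl
      · exact (Pcol.bijective_map_incl_iff f (Fin.le_last p)).1 (h p hp)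
      · have h := lowTri.extend_mul f (lowTri.single_one_mem (le_refl (Fin.last m)))
          (lowTri.single_one_mem (le_refl (Fin.last m)))
        rw [single_mul_single_same, one_mul] at h
        exact ⟨_, h.symm, h.symm, h.symm⟩
    choose π hπ using this
    exact ⟨π, ⟨fun p => (hπ p).1, fun p => (hπ p).2.1, fun p => (hπ p).2.2⟩⟩
  · rintro ⟨π, hπ⟩ i hi
    exact (Pcol.bijective_map_incl_iff f (i := ⟨i, by omega⟩) (j := Fin.last m) hi.le).2
      ⟨π _, hπ.mul_extend_last _, hπ.extend_row_mul _, hπ.mul_extend_row _⟩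

namespace IsLastColumn

variable {k S} {m : ℕ} {T : Type*} [Ring T] {f : lowTri k S (m + 1) →+* T} {π : Fin (m + 1) → T}
variable (hπ : IsLastColumn f π)
include hπ

local notation "ℓ" => Fin.last m

theorem extend_diag_mul (p : Fin (m + 1)) : lowTri.extend f (single p p 1) * π p = π p := by
  rw [← hπ.mul_extend_row, mul_assoc, hπ.extend_row_mul, hπ.mul_extend_last]

theorem mul_extend_single_last {p q : Fin (m + 1)} {s : S}
    (h : q < p ∨ q = p ∧ s ∈ (algebraMap k S).range) :
    π p * lowTri.extend f (single ℓ q s) = lowTri.extend f (single p q s) := by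
  have hℓp := lowTri.single_one_mem (k := k) (S := S) (Fin.le_last p)
  have hpp := lowTri.single_one_mem (k := k) (S := S) (le_refl p)
  have hsplit : single ℓ q s = single ℓ p 1 * single p q s := by
    rw [single_mul_single_same, one_mul]
  rw [hsplit, lowTri.extend_mul f hℓp (lowTri.single_mem h), ← mul_assoc, hπ.mul_extend_row,
    ← lowTri.extend_mul f hpp (lowTri.single_mem h), single_mul_single_same, one_mul]

theorem extend_single_zero_mul (q : Fin (m + 1)) :
    lowTri.extend f (single q 0 1) * π 0 = π q := by
  rw [← hπ.mul_extend_single_last ((Fin.zero_le q).lt_or_eq.imp_right (⟨·, 1, map_one _⟩)),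
    mul_assoc, hπ.extend_row_mul, hπ.mul_extend_last]

theorem extend_single_last_mul {q : Fin (m + 1)} {s : S}
    (h : q < ℓ ∨ q = ℓ ∧ s ∈ (algebraMap k S).range) :
    lowTri.extend f (single ℓ q s) * π q = lastCorner f π s := by
  rw [← hπ.extend_single_zero_mul q, ← mul_assoc,
    ← lowTri.extend_mul f (lowTri.single_mem h) (lowTri.single_one_mem (Fin.zero_le q)),
    single_mul_single_same, mul_one, lastCorner]

/-- Route `(s * s') • E ℓ 0` through a middle index `j`:
it is `(s • E ℓ j) * E j ℓ * (s' • E ℓ 0) * E 0 ℓ`, and `E j ℓ * (s' • E ℓ 0) = s' • E j 0 ∈ A`. -/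
theorem lastCorner_mul {j : Fin (m + 1)} (h0j : 0 < j) (hjℓ : j < ℓ) (s s' : S) :
    lastCorner f π (s * s') = lastCorner f π s * lastCorner f π s' := by
  symm
  calc lastCorner f π s * lastCorner f π s'
      = lowTri.extend f (single ℓ j s) * (π j * lowTri.extend f (single ℓ 0 s')) * π 0 := by
        rw [← hπ.extend_single_last_mul (s := s) (Or.inl hjℓ), lastCorner]
        simp only [mul_assoc]
    _ = lowTri.extend f (single ℓ j s * single j 0 s') * π 0 := by
        rw [hπ.mul_extend_single_last (Or.inl h0j),
          lowTri.extend_mul f (lowTri.single_mem (Or.inl hjℓ)) (lowTri.single_mem (Or.inl h0j))]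
    _ = lastCorner f π (s * s') := by rw [single_mul_single_same, lastCorner]

theorem lastCorner_one : lastCorner f π 1 = lowTri.extend f (single ℓ ℓ 1) :=
  hπ.extend_row_mul 0

theorem extend_row_mul_eq (q p : Fin (m + 1)) :
    lowTri.extend f (single ℓ q 1) * π p = if q = p then lastCorner f π 1 else 0 := by
  split_ifs with h
  · rw [h, hπ.lastCorner_one, hπ.extend_row_mul]
  · rw [← hπ.extend_diag_mul p, ← mul_assoc, ← lowTri.extend_mul f
      (lowTri.single_one_mem (Fin.le_last q)) (lowTri.single_one_mem le_rfl),
      single_mul_single_of_ne (h := h), lowTri.extend_zero, zero_mul]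

theorem sum_mul_lastCorner_one_mul :
    ∑ p, π p * lastCorner f π 1 * lowTri.extend f (single ℓ p 1) = 1 := by
  simp only [hπ.lastCorner_one, hπ.mul_extend_last, hπ.mul_extend_row]
  exact lowTri.sum_extend_single_one f

theorem mul_lastCorner_mul {p q : Fin (m + 1)} {s : S}
    (h : q < p ∨ q = p ∧ s ∈ (algebraMap k S).range) :
    π p * lastCorner f π s * lowTri.extend f (single ℓ q 1) = lowTri.extend f (single p q s) := by
  have hℓ : q < ℓ ∨ q = ℓ ∧ s ∈ (algebraMap k S).range := by
    rcases h with h | ⟨rfl, hs⟩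
    · exact Or.inl (h.trans_le (Fin.le_last p))
    · exact (Fin.le_last q).lt_or_eq.imp_right (⟨·, hs⟩)
  rw [← hπ.extend_single_last_mul hℓ, mul_assoc, mul_assoc, hπ.mul_extend_row,
    ← lowTri.extend_mul f (lowTri.single_mem hℓ) (lowTri.single_one_mem le_rfl),
    single_mul_single_same, mul_one, hπ.mul_extend_single_last h]

noncomputable def lastCornerHom {j : Fin (m + 1)} (h0j : 0 < j) (hjℓ : j < ℓ) : S →ₙ+* T where
  toFun := lastCorner f π
  map_zero' := by rw [lastCorner, single_zero, lowTri.extend_zero, zero_mul]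
  map_add' := lastCorner_add f (h0j.trans hjℓ)
  map_mul' := hπ.lastCorner_mul h0j hjℓ

theorem mul_lastCorner_mul_apply (a : lowTri k S (m + 1)) (p q : Fin (m + 1)) :
    π p * lastCorner f π (a.1 p q) * lowTri.extend f (single ℓ q 1) =
      lowTri.extend f (single p q (a.1 p q)) := by
  rcases lt_trichotomy q p with h | rfl | h
  · exact hπ.mul_lastCorner_mul (Or.inl h)
  · exact hπ.mul_lastCorner_mul (Or.inr ⟨rfl, a.2.2 q⟩)
  · rw [a.2.1 p q h, single_zero, lowTri.extend_zero, lastCorner, single_zero, lowTri.extend_zero,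
      zero_mul, mul_zero, zero_mul]

theorem apply_coe_of_apply_single {g : Matrix (Fin (m + 1)) (Fin (m + 1)) S →+* T}
    (hg : ∀ p q s, g (single p q s) = π p * lastCorner f π s * lowTri.extend f (single ℓ q 1))
    (a : lowTri k S (m + 1)) : g a = f a := by
  conv_lhs => rw [matrix_eq_sum_single a.1]
  conv_rhs => rw [lowTri.eq_sum_single a]
  simp only [map_sum, hg, hπ.mul_lastCorner_mul_apply,
    lowTri.extend_of_mem f (lowTri.single_apply_mem a _ _)]

theorem apply_single_of_extends (h0 : 0 < ℓ) {g : Matrix (Fin (m + 1)) (Fin (m + 1)) S →+* T}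
    (hg : ∀ a : lowTri k S (m + 1), g a = f a) (p q : Fin (m + 1)) (s : S) :
    g (single p q s) = π p * lastCorner f π s * lowTri.extend f (single ℓ q 1) := by
  have hgA : ∀ {x}, x ∈ lowTri k S (m + 1) → g x = lowTri.extend f x := fun hx => by
    rw [lowTri.extend_of_mem f hx]; exact hg ⟨_, hx⟩
  have hcol : ∀ p, g (single p ℓ 1) = π p := fun p => by
    calc g (single p ℓ 1) = g (single p ℓ 1 * single ℓ p 1) * π p := by
          rw [map_mul, mul_assoc, hgA (lowTri.single_one_mem (Fin.le_last p)), hπ.extend_row_mul,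
            ← hgA (lowTri.single_one_mem le_rfl), ← map_mul, single_mul_single_same, one_mul]
      _ = π p := by
          rw [single_mul_single_same, one_mul, hgA (lowTri.single_one_mem le_rfl),
            hπ.extend_diag_mul]
  have hsplit : single p q s = single p ℓ 1 * single ℓ 0 s * single 0 ℓ 1 * single ℓ q 1 := by
    simp only [single_mul_single_same, one_mul, mul_one]
  rw [hsplit, map_mul, map_mul, map_mul, hcol, hcol, hgA (lowTri.single_mem (Or.inl h0)),
    hgA (lowTri.single_one_mem (Fin.le_last q)), lastCorner, mul_assoc (π p)]

end IsLastColumn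

theorem invertsSigma_subtype (m : ℕ) : InvertsSigma k S (m + 1) (lowTri k S (m + 1)).subtype := by
  have hι : ∀ {p q : Fin (m + 1)}, q ≤ p →
      lowTri.extend (lowTri k S (m + 1)).subtype (single p q 1) = single p q 1 :=
    fun h => lowTri.extend_of_mem _ (lowTri.single_one_mem h)
  refine (invertsSigma_iff_exists_isLastColumn _).2
    ⟨fun p => single p (Fin.last m) 1, fun p => ?_, fun p => ?_, fun p => ?_⟩ <;>
  simp only [hι le_rfl, hι (Fin.le_last p), single_mul_single_same, one_mul]

theorem statement12_general (k S : Type u) [CommRing k] [Ring S] [Algebra k S]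
    (n : ℕ) (hn : 3 ≤ n) :
    InvertsSigma k S n ((lowTri k S n).subtype)
    ∧ ∀ (T : Type u) [Ring T] (f : (lowTri k S n) →+* T), InvertsSigma k S n f →
        ∃! g : Matrix (Fin n) (Fin n) S →+* T, ∀ a : lowTri k S n, g a.1 = f a := by
  obtain ⟨m, rfl⟩ : ∃ m, n = m + 1 := ⟨n - 1, by omega⟩
  have h01 : (0 : Fin (m + 1)) < ⟨1, by omega⟩ := Fin.mk_lt_mk.2 one_pos
  have h1ℓ : (⟨1, by omega⟩ : Fin (m + 1)) < Fin.last m := Fin.mk_lt_mk.2 (by omega)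
  refine ⟨invertsSigma_subtype k S m, fun T _ f hf => ?_⟩
  obtain ⟨π, hπ⟩ := (invertsSigma_iff_exists_isLastColumn f).1 hf
  let g := liftCorner (hπ.lastCornerHom h01 h1ℓ) π
    (fun q => lowTri.extend f (single (Fin.last m) q 1)) hπ.extend_row_mul_eq
    hπ.sum_mul_lastCorner_one_mul
  have hg : ∀ p q s,
      g (single p q s) = π p * lastCorner f π s * lowTri.extend f (single (Fin.last m) q 1) :=
    liftCorner_single _ _ _ _ _
  refine ⟨g, hπ.apply_coe_of_apply_single hg, fun g' hg' => ringHom_ext_single fun p q s => ?_⟩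
  rw [hπ.apply_single_of_extends (h01.trans h1ℓ) hg', hg]

/-- Let `k` be a commutative ring, `S` a `k`-algebra flat over `k`,
`n ≥ 3`, `A ⊆ Mₙ(S)` the subring of lower triangular matrices with diagonal entries in
the image of `k → S`, `P_i` the column modules and `s_i : P_{n-1} → P_i` (`i < n-1`)
the inclusions.  Then the inclusion `A ↪ Mₙ(S)` is the universal `{s_i}`-inverting ring
homomorphism: it is `{s_i}`-inverting, and for every ring `T` and ring homomorphism
`f : A → T` inverting the `s_i`, there is a unique ring homomorphism `g : Mₙ(S) → T`
whose restriction to `A` is `f`. -/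
theorem statement12 (k S : Type u) [CommRing k] [Ring S] [Algebra k S] [Module.Flat k S]
    (n : ℕ) (hn : 3 ≤ n) :
    InvertsSigma k S n ((lowTri k S n).subtype)
    ∧ ∀ (T : Type u) [Ring T] (f : (lowTri k S n) →+* T), InvertsSigma k S n f →
        ∃! g : Matrix (Fin n) (Fin n) S →+* T, ∀ a : lowTri k S n, g a.1 = f a :=
  statement12_general k S n hn
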